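/- For every positive integer n there exists a constant C > 0 such that for every vector e ∈ ℝⁿ one has ∫_{S^{n−1}} |e| / (1 + (e·η)²) dH^{n−1}(η) ≤ C, where the integral is over the unit sphere S^{n−1} = {η ∈ ℝⁿ : |η| = 1} with respect to the (n−1)-dimensional Hausdorff (surface) measure H^{n−1}. -/

import Mathlib

/-!
With `n = m + 1`, a reflection taking `e` to `‖e‖ • e₀` preserves the sphere and `μH`, so the
integrand may be taken to be `r / (1 + (r η₀)²)` with `r = ‖e‖`. Radial projection of the `2(m+1)` faces of the cube
`[-1,1]^{m+1}` covers the sphere by `2(m+1)`-Lipschitz images of `[-1,1]^m`, on which `μH[m]` is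
controlled by Lebesgue measure. On a face point `x`, `η₀ = x₀ / ‖x‖` with `1 ≤ ‖x‖² ≤ m+1`, which
costs a factor `m+1`. On the two faces normal to `e₀` the integrand is then at most `1`; on every
other face `x₀` is a free coordinate, and `∫ r / (1 + (r t)²) dt = π` whatever `r` is.
-/

open MeasureTheory Metric Set Real
open scoped NNReal ENNReal

theorem LipschitzOnWith.setLIntegral_image_hausdorffMeasure_le {X Y : Type*}
    [EMetricSpace X] [MeasurableSpace X] [BorelSpace X]
    [EMetricSpace Y] [MeasurableSpace Y] [BorelSpace Y]
    {K : ℝ≥0} {f : X → Y} {s : Set X} (hf : LipschitzOnWith K f s) (hs : MeasurableSet s)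
    {d : ℝ} (hd : 0 ≤ d) {g : Y → ℝ≥0∞} (hg : Measurable g) :
    ∫⁻ y in f '' s, g y ∂μH[d] ≤ (K : ℝ≥0∞) ^ d * ∫⁻ x in s, g (f x) ∂μH[d] := by
  have hfm : AEMeasurable f (μH[d].restrict s) := hf.continuousOn.aemeasurable hs
  have hμ : μH[d].restrict (f '' s) ≤ (K : ℝ≥0∞) ^ d • (μH[d].restrict s).map f := by
    refine Measure.le_iff.2 fun t ht => ?_
    rw [Measure.restrict_apply ht, Measure.smul_apply, Measure.map_apply_of_aemeasurable hfm ht,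
      smul_eq_mul]
    calc μH[d] (t ∩ f '' s) ≤ μH[d] (f '' (f ⁻¹' t ∩ s)) :=
          measure_mono (by rintro _ ⟨hyt, x, hx, rfl⟩; exact ⟨x, ⟨hyt, hx⟩, rfl⟩)
      _ ≤ (K : ℝ≥0∞) ^ d * μH[d] (f ⁻¹' t ∩ s) :=
          (hf.mono inter_subset_right).hausdorffMeasure_image_le hd
      _ ≤ (K : ℝ≥0∞) ^ d * μH[d].restrict s (f ⁻¹' t) :=
          mul_le_mul' le_rfl (Measure.le_restrict_apply _ _)
  calc ∫⁻ y in f '' s, g y ∂μH[d] ≤ ∫⁻ y, g y ∂((K : ℝ≥0∞) ^ d • (μH[d].restrict s).map f) :=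
        lintegral_mono' hμ le_rfl
    _ = (K : ℝ≥0∞) ^ d * ∫⁻ x in s, g (f x) ∂μH[d] := by
        rw [lintegral_smul_measure, lintegral_map' hg.aemeasurable hfm, smul_eq_mul]

theorem LinearIsometryEquiv.setLIntegral_sphere_comp {F : Type*} [NormedAddCommGroup F]
    [NormedSpace ℝ F] [MeasurableSpace F] [BorelSpace F] (T : F ≃ₗᵢ[ℝ] F) (R d : ℝ)
    (g : F → ℝ≥0∞) :
    ∫⁻ η in sphere 0 R, g (T η) ∂μH[d] = ∫⁻ η in sphere 0 R, g η ∂μH[d] := by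
  have hpre : T ⁻¹' sphere 0 R = sphere 0 R := by ext η; simp
  conv_lhs => rw [← hpre]
  exact (T.toIsometryEquiv.measurePreserving_hausdorffMeasure d).setLIntegral_comp_preimage_emb
    T.toHomeomorph.measurableEmbedding g _

theorem exists_linearIsometryEquiv_inner_eq {F : Type*} [NormedAddCommGroup F]
    [InnerProductSpace ℝ F] (e w : F) (hw : ‖w‖ = 1) :
    ∃ T : F ≃ₗᵢ[ℝ] F, ∀ η, inner ℝ e η = ‖e‖ * inner ℝ w (T η) := by
  have hnorm : ‖e‖ = ‖‖e‖ • w‖ := by rw [norm_smul, hw, norm_norm, mul_one]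
  refine ⟨Submodule.reflection (ℝ ∙ (e - ‖e‖ • w))ᗮ, fun η => ?_⟩
  rw [← LinearIsometryEquiv.inner_map_map (Submodule.reflection (ℝ ∙ (e - ‖e‖ • w))ᗮ) e η,
    Submodule.reflection_sub hnorm, real_inner_smul_left]

theorem lipschitzOnWith_inv_norm_smul {E : Type*} [NormedAddCommGroup E] [NormedSpace ℝ E] :
    LipschitzOnWith 2 (fun x : E => ‖x‖⁻¹ • x) {x | 1 ≤ ‖x‖} := by
  refine LipschitzOnWith.of_dist_le_mul fun x hx y hy => ?_
  simp only [mem_ofPred_eq] at hx hy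
  have hx0 : 0 < ‖x‖ := one_pos.trans_le hx
  have hy0 : 0 < ‖y‖ := one_pos.trans_le hy
  have hsplit : ‖x‖⁻¹ • x - ‖y‖⁻¹ • y = ‖x‖⁻¹ • (x - y) + (‖x‖⁻¹ - ‖y‖⁻¹) • y := by
    rw [smul_sub, sub_smul]; abel
  have hcoef : |‖x‖⁻¹ - ‖y‖⁻¹| * ‖y‖ ≤ ‖x - y‖ := by
    rw [inv_sub_inv hx0.ne' hy0.ne', abs_div, abs_of_pos (mul_pos hx0 hy0), div_mul_eq_mul_div,
      div_le_iff₀ (mul_pos hx0 hy0), abs_sub_comm]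
    nlinarith [mul_le_mul_of_nonneg_right (abs_norm_sub_norm_le x y) hy0.le,
      mul_le_mul_of_nonneg_right hx (mul_nonneg (norm_nonneg (x - y)) hy0.le)]
  rw [dist_eq_norm, dist_eq_norm, hsplit, NNReal.coe_ofNat]
  calc ‖‖x‖⁻¹ • (x - y) + (‖x‖⁻¹ - ‖y‖⁻¹) • y‖
      ≤ ‖x‖⁻¹ * ‖x - y‖ + |‖x‖⁻¹ - ‖y‖⁻¹| * ‖y‖ := by
        refine (norm_add_le _ _).trans_eq ?_
        rw [norm_smul, norm_smul, norm_inv, norm_norm, Real.norm_eq_abs]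
    _ ≤ 1 * ‖x - y‖ + ‖x - y‖ := by
        gcongr
        exact inv_le_one_of_one_le₀ hx
    _ = 2 * ‖x - y‖ := by ring

noncomputable def lorentzian (r t : ℝ) : ℝ := r / (1 + (r * t) ^ 2)

theorem lorentzian_nonneg {r : ℝ} (hr : 0 ≤ r) (t : ℝ) : 0 ≤ lorentzian r t := by
  unfold lorentzian; positivity

@[fun_prop]
theorem continuous_lorentzian (r : ℝ) : Continuous (lorentzian r) :=
  continuous_const.div (by fun_prop) fun t => by positivity

theorem lorentzian_le_one_of_abs_eq_one (r : ℝ) {t : ℝ} (ht : |t| = 1) : lorentzian r t ≤ 1 := by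
  rw [lorentzian, div_le_one (by positivity), mul_pow, ← sq_abs t, ht]
  nlinarith [sq_nonneg (r - 1)]

theorem lorentzian_div_le {r c N : ℝ} (hr : 0 ≤ r) (hc : 1 ≤ c) (hcN : c ^ 2 ≤ N) (t : ℝ) :
    lorentzian r (t / c) ≤ N * lorentzian r t := by
  have hc0 : 0 < c := one_pos.trans_le hc
  have hN : 1 ≤ N := by nlinarith
  have hu : (r * t) ^ 2 = (r * (t / c)) ^ 2 * c ^ 2 := by field_simp
  rw [lorentzian, lorentzian, hu, ← mul_div_assoc N,
    div_le_div_iff₀ (by positivity) (by positivity)]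
  nlinarith [mul_le_mul_of_nonneg_left hN hr,
    mul_le_mul_of_nonneg_left hcN (mul_nonneg hr (sq_nonneg (r * (t / c))))]

theorem lintegral_lorentzian_le {r : ℝ} (hr : 0 ≤ r) :
    ∫⁻ t, ENNReal.ofReal (lorentzian r t) ≤ ENNReal.ofReal π := by
  rcases hr.eq_or_lt with rfl | hr
  · simp [lorentzian]
  have hint : Integrable (fun t : ℝ => r * (1 + (r * t) ^ 2)⁻¹) :=
    (integrable_inv_one_add_sq.comp_mul_left' hr.ne').const_mul r
  have hval : ∫ t, r * (1 + (r * t) ^ 2)⁻¹ = π := by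
    rw [integral_const_mul, Measure.integral_comp_mul_left (fun x => (1 + x ^ 2)⁻¹) r,
      integral_univ_inv_one_add_sq, smul_eq_mul, abs_of_pos (inv_pos.2 hr)]
    field_simp
  simp only [lorentzian, div_eq_mul_inv]
  rw [← ofReal_integral_eq_lintegral_ofReal hint (.of_forall fun t => by positivity), hval]

theorem lintegral_Icc_comp_eval {ι : Type*} [Fintype ι] [DecidableEq ι] (a b : ι → ℝ) (k : ι)
    {g : ℝ → ℝ≥0∞} (hg : Measurable g) :
    ∫⁻ y in Icc a b, g (y k) =
      (∏ j ∈ Finset.univ.erase k, ENNReal.ofReal (b j - a j)) * ∫⁻ t in Icc (a k) (b k), g t := by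
  rw [← pi_univ_Icc, volume_pi, Measure.restrict_pi_pi,
    ← lintegral_map hg (measurable_pi_apply k), Measure.pi_map_eval, lintegral_smul_measure,
    smul_eq_mul]
  simp [Real.volume_Icc]

section CubeFace

variable {m : ℕ}

noncomputable def cubeFace (i : Fin (m + 1)) (s : ℝ) (y : Fin m → ℝ) :
    EuclideanSpace ℝ (Fin (m + 1)) :=
  WithLp.toLp 2 (i.insertNth s y)

noncomputable def sphereChart (i : Fin (m + 1)) (s : ℝ) (y : Fin m → ℝ) :
    EuclideanSpace ℝ (Fin (m + 1)) :=
  ‖cubeFace i s y‖⁻¹ • cubeFace i s y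

@[simp] theorem cubeFace_apply_self (i : Fin (m + 1)) (s : ℝ) (y : Fin m → ℝ) :
    cubeFace i s y i = s := by
  simp [cubeFace]

@[simp] theorem cubeFace_apply_succAbove (i : Fin (m + 1)) (s : ℝ) (y : Fin m → ℝ) (k : Fin m) :
    cubeFace i s y (i.succAbove k) = y k := by
  simp [cubeFace]

theorem one_le_norm_cubeFace (i : Fin (m + 1)) {s : ℝ} (hs : |s| = 1) (y : Fin m → ℝ) :
    1 ≤ ‖cubeFace i s y‖ := by
  simpa [hs] using PiLp.norm_apply_le (cubeFace i s y) i

theorem norm_cubeFace_sq_le (i : Fin (m + 1)) {s : ℝ} (hs : |s| = 1) {y : Fin m → ℝ}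
    (hy : y ∈ Icc (-1) 1) : ‖cubeFace i s y‖ ^ 2 ≤ m + 1 := by
  have hyk : ∀ k, y k ^ 2 ≤ 1 := fun k => by
    rw [sq_le_one_iff_abs_le_one, abs_le]; exact ⟨hy.1 k, hy.2 k⟩
  rw [EuclideanSpace.norm_sq_eq, Fin.sum_univ_succAbove _ i]
  simp only [cubeFace_apply_self, cubeFace_apply_succAbove, Real.norm_eq_abs, sq_abs]
  calc s ^ 2 + ∑ k, y k ^ 2 ≤ 1 + ∑ _k : Fin m, (1 : ℝ) := by
        gcongr with k
        · rw [← sq_abs, hs, one_pow]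
        · exact hyk k
    _ = m + 1 := by simp [add_comm]

theorem lipschitzWith_insertNth {β : Type*} [PseudoMetricSpace β] (i : Fin (m + 1)) (b : β) :
    LipschitzWith 1 (Fin.insertNth (α := fun _ => β) i b) := by
  refine LipschitzWith.of_dist_le_mul fun y z => ?_
  rw [NNReal.coe_one, one_mul, dist_pi_le_iff dist_nonneg]
  intro j
  induction j using i.succAboveCases with
  | x => simp
  | p k => simpa using dist_le_pi_dist y z k

theorem lipschitzWith_cubeFace (i : Fin (m + 1)) (s : ℝ) :
    LipschitzWith (m + 1) (cubeFace i s) := by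
  refine ((PiLp.lipschitzWith_toLp 2 _).comp (lipschitzWith_insertNth i s)).weaken ?_
  rw [mul_one, Fintype.card_fin, ← NNReal.coe_le_coe]
  push_cast
  exact Real.rpow_le_self_of_one_le (by linarith [m.cast_nonneg (α := ℝ)]) (by norm_num)

theorem lipschitzWith_sphereChart (i : Fin (m + 1)) {s : ℝ} (hs : |s| = 1) :
    LipschitzWith (2 * (m + 1)) (sphereChart i s) := by
  rw [← lipschitzOnWith_univ]
  exact lipschitzOnWith_inv_norm_smul.comp (lipschitzWith_cubeFace i s).lipschitzOnWith
    fun y _ => one_le_norm_cubeFace i hs y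

theorem sphereChart_apply (i : Fin (m + 1)) (s : ℝ) (y : Fin m → ℝ) (j : Fin (m + 1)) :
    sphereChart i s y j = cubeFace i s y j / ‖cubeFace i s y‖ := by
  simp [sphereChart, div_eq_inv_mul]

theorem sphere_subset_iUnion_sphereChart :
    sphere (0 : EuclideanSpace ℝ (Fin (m + 1))) 1 ⊆
      ⋃ i, (sphereChart i 1 '' Icc (-1) 1 ∪ sphereChart i (-1) '' Icc (-1) 1) := by
  intro η hη
  rw [mem_sphere_zero_iff_norm] at hη
  obtain ⟨i, -, hi⟩ := Finset.exists_max_image Finset.univ (fun j => |η j|) Finset.univ_nonempty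
  have hc : 0 < |η i| := by
    by_contra! h
    have : η = 0 := by
      ext j; simpa using (hi j (Finset.mem_univ j)).trans h
    simp [this] at hη
  set x := |η i|⁻¹ • η with hx_def
  have hx : ∀ j, x j = η j / |η i| := fun j => by simp [hx_def, div_eq_inv_mul]
  have hchart : sphereChart i (x i) (i.removeNth x) = η := by
    have hface : cubeFace i (x i) (i.removeNth x) = x := by simp [cubeFace]
    rw [sphereChart, hface, hx_def, norm_smul, hη, mul_one, norm_inv, Real.norm_eq_abs, abs_abs,
      smul_smul, inv_inv, mul_inv_cancel₀ hc.ne', one_smul]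
  have hbound : ∀ k, |x (i.succAbove k)| ≤ 1 := fun k => by
    rw [hx, abs_div, abs_abs]; exact (div_le_one hc).2 (hi _ (Finset.mem_univ _))
  have hy : i.removeNth x ∈ Icc (-1) 1 :=
    ⟨fun k => (abs_le.1 (hbound k)).1, fun k => (abs_le.1 (hbound k)).2⟩
  have hsign : x i = 1 ∨ x i = -1 :=
    (abs_eq zero_le_one).1 (by rw [hx, abs_div, abs_abs, div_self hc.ne'])
  refine mem_iUnion.2 ⟨i, ?_⟩
  rcases hsign with h | h
  · exact Or.inl ⟨_, hy, h ▸ hchart⟩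
  · exact Or.inr ⟨_, hy, h ▸ hchart⟩

end CubeFace

section FaceIntegrals

variable {m : ℕ} {r : ℝ}

theorem lintegral_lorentzian_cubeFace_le (hr : 0 ≤ r) (i : Fin (m + 1)) {s : ℝ} (hs : |s| = 1) :
    ∫⁻ y in Icc (-1 : Fin m → ℝ) 1, ENNReal.ofReal (lorentzian r (cubeFace i s y 0)) ≤
      ENNReal.ofReal (2 ^ m * π) := by
  have hvol : volume (Icc (-1 : Fin m → ℝ) 1) = ENNReal.ofReal (2 ^ m) := by
    rw [Real.volume_Icc_pi]
    norm_num [ENNReal.ofReal_pow]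
  rcases eq_or_ne i 0 with rfl | hi
  · calc ∫⁻ y in Icc (-1 : Fin m → ℝ) 1, ENNReal.ofReal (lorentzian r (cubeFace 0 s y 0))
          ≤ ∫⁻ _ in Icc (-1 : Fin m → ℝ) 1, 1 := by
            gcongr with y
            rw [cubeFace_apply_self]
            exact ENNReal.ofReal_le_one.2 (lorentzian_le_one_of_abs_eq_one r hs)
      _ = ENNReal.ofReal (2 ^ m * 1) := by rw [setLIntegral_const, hvol, one_mul, mul_one]
      _ ≤ ENNReal.ofReal (2 ^ m * π) := by gcongr; linarith [pi_gt_three]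
  · obtain ⟨k, hk⟩ := Fin.exists_succAbove_eq hi.symm
    simp_rw [← hk, cubeFace_apply_succAbove]
    rw [lintegral_Icc_comp_eval _ _ k (continuous_lorentzian r).measurable.ennreal_ofReal,
      ENNReal.ofReal_mul (by positivity)]
    gcongr
    · rw [ENNReal.ofReal_pow zero_le_two]
      simp only [Pi.one_apply, Pi.neg_apply, sub_neg_eq_add, one_add_one_eq_two,
        Finset.prod_const]
      exact pow_le_pow_right₀ (by simp) ((Finset.card_le_univ _).trans_eq (Fintype.card_fin m))
    · exact (setLIntegral_le_lintegral _ _).trans (lintegral_lorentzian_le hr)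

theorem lintegral_lorentzian_sphereChart_le (hr : 0 ≤ r) (i : Fin (m + 1)) {s : ℝ}
    (hs : |s| = 1) :
    ∫⁻ y in Icc (-1 : Fin m → ℝ) 1, ENNReal.ofReal (lorentzian r (sphereChart i s y 0)) ≤
      ENNReal.ofReal ((m + 1) * (2 ^ m * π)) := by
  calc ∫⁻ y in Icc (-1 : Fin m → ℝ) 1, ENNReal.ofReal (lorentzian r (sphereChart i s y 0))
      ≤ ∫⁻ y in Icc (-1 : Fin m → ℝ) 1,
          ENNReal.ofReal (m + 1) * ENNReal.ofReal (lorentzian r (cubeFace i s y 0)) := by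
        refine setLIntegral_mono' measurableSet_Icc fun y hy => ?_
        rw [← ENNReal.ofReal_mul (by positivity), sphereChart_apply]
        exact ENNReal.ofReal_le_ofReal <| lorentzian_div_le hr (one_le_norm_cubeFace i hs y)
          (norm_cubeFace_sq_le i hs hy) _
    _ ≤ ENNReal.ofReal (m + 1) * ENNReal.ofReal (2 ^ m * π) := by
        have := (lipschitzWith_cubeFace i s).continuous
        rw [lintegral_const_mul _ (by fun_prop)]
        exact mul_le_mul' le_rfl (lintegral_lorentzian_cubeFace_le hr i hs)
    _ = ENNReal.ofReal ((m + 1) * (2 ^ m * π)) := (ENNReal.ofReal_mul (by positivity)).symm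

theorem lintegral_lorentzian_image_sphereChart_le (hr : 0 ≤ r) (i : Fin (m + 1)) {s : ℝ}
    (hs : |s| = 1) :
    ∫⁻ η in sphereChart i s '' Icc (-1) 1, ENNReal.ofReal (lorentzian r (η 0)) ∂μH[m] ≤
      ENNReal.ofReal ((2 * (m + 1)) ^ m * ((m + 1) * (2 ^ m * π))) := by
  have hvol : (μH[m] : Measure (Fin m → ℝ)) = volume := by
    simpa using hausdorffMeasure_pi_real (ι := Fin m)
  have himage := LipschitzOnWith.setLIntegral_image_hausdorffMeasure_le
    (lipschitzWith_sphereChart i hs).lipschitzOnWith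
    (measurableSet_Icc : MeasurableSet (Icc (-1 : Fin m → ℝ) 1)) m.cast_nonneg
    (g := fun η => ENNReal.ofReal (lorentzian r (η 0))) (by fun_prop)
  rw [hvol] at himage
  refine himage.trans ?_
  rw [ENNReal.rpow_natCast, ENNReal.ofReal_mul (by positivity)]
  gcongr
  · rw [ENNReal.ofReal_pow (by positivity), ← ENNReal.ofReal_coe_nnreal]
    push_cast
    rfl
  · exact lintegral_lorentzian_sphereChart_le hr i hs

end FaceIntegrals

theorem lintegral_lorentzian_sphere_le (m : ℕ) {r : ℝ} (hr : 0 ≤ r) :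
    ∫⁻ η in sphere (0 : EuclideanSpace ℝ (Fin (m + 1))) 1,
        ENNReal.ofReal (lorentzian r (η 0)) ∂μH[m] ≤
      ENNReal.ofReal ((m + 1) * (2 * ((2 * (m + 1)) ^ m * ((m + 1) * (2 ^ m * π))))) := by
  set B := ENNReal.ofReal ((2 * (m + 1)) ^ m * ((m + 1) * (2 ^ m * π)))
  calc ∫⁻ η in sphere (0 : EuclideanSpace ℝ (Fin (m + 1))) 1,
        ENNReal.ofReal (lorentzian r (η 0)) ∂μH[m]
      ≤ ∫⁻ η in ⋃ i, (sphereChart i 1 '' Icc (-1) 1 ∪ sphereChart i (-1) '' Icc (-1) 1),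
          ENNReal.ofReal (lorentzian r (η 0)) ∂μH[m] :=
        lintegral_mono_set sphere_subset_iUnion_sphereChart
    _ ≤ ∑' i : Fin (m + 1), (B + B) := by
        refine (lintegral_iUnion_le _ _).trans (ENNReal.tsum_le_tsum fun i => ?_)
        refine (lintegral_union_le _ _ _).trans (add_le_add ?_ ?_)
        · exact lintegral_lorentzian_image_sphereChart_le hr i abs_one
        · exact lintegral_lorentzian_image_sphereChart_le hr i (by simp)
    _ = _ := by
        rw [tsum_fintype, Finset.sum_const, Finset.card_univ, Fintype.card_fin, nsmul_eq_mul,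
          ← two_mul, ENNReal.ofReal_mul (by positivity), ENNReal.ofReal_mul zero_le_two,
          ENNReal.ofReal_ofNat, ENNReal.ofReal_add m.cast_nonneg zero_le_one,
          ENNReal.ofReal_natCast, ENNReal.ofReal_one, Nat.cast_add_one]

theorem stmt1 (n : ℕ) (hn : 0 < n) :
    ∃ C : ℝ, 0 < C ∧ ∀ e : EuclideanSpace ℝ (Fin n),
      (∫ η in Metric.sphere (0 : EuclideanSpace ℝ (Fin n)) 1,
        ‖e‖ / (1 + (inner ℝ e η : ℝ) ^ 2) ∂(μH[(n : ℝ) - 1])) ≤ C := by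
  obtain ⟨m, rfl⟩ := Nat.exists_eq_add_one_of_ne_zero hn.ne'
  refine ⟨(m + 1) * (2 * ((2 * (m + 1)) ^ m * ((m + 1) * (2 ^ m * π)))), by positivity,
    fun e => ?_⟩
  obtain ⟨T, hT⟩ := exists_linearIsometryEquiv_inner_eq e (EuclideanSpace.single 0 1) (by simp)
  have hinner : ∀ η, ‖e‖ / (1 + inner ℝ e η ^ 2) = lorentzian ‖e‖ (T η 0) := fun η => by
    simp [hT, lorentzian, EuclideanSpace.inner_single_left]
  rw [Nat.cast_add_one, add_sub_cancel_right]
  simp_rw [hinner]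
  rw [integral_eq_lintegral_of_nonneg_ae
      (.of_forall fun η => lorentzian_nonneg (norm_nonneg e) _) (by fun_prop),
    T.setLIntegral_sphere_comp 1 m (fun η => ENNReal.ofReal (lorentzian ‖e‖ (η 0)))]
  exact ENNReal.toReal_le_of_le_ofReal (by positivity)
    (lintegral_lorentzian_sphere_le m (norm_nonneg e))
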